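/- Let G(m, b, d) be a D3 graph with m ≥ 2. Then there exists a cycle in G(m, b, d) whose length equals the girth of G(m, b, d) and which passes through some vertex v of ZMod (2*m) with v.val < 2*b. In other words, the girth of the D3 graph is realized by a shortest cycle through one of the first 2b vertices. -/

import Mathlib

/-!
The edges `x — x + 1` form a Hamiltonian cycle, so the graph is not acyclic and its girth is
attained by some cycle through a vertex `a`. Translation by any `u ≡ 0 (mod 2b)` preserves parities and
residues mod `2b`, hence maps chords to chords and is an automorphism; translating by
`(a.val % 2b) - a` moves the cycle to one of the same length through `a.val % 2b < 2b`.
-/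

/-- The chord/successor relation underlying the D3 graph: `y` follows `x` along the
Hamiltonian cycle, or `y` is reached from an odd-labelled `x` by the chord `d j`,
where `j` is the (unique) index with `x.val ≡ 2*j + 1 (mod 2*b)`. -/
def d3Rel (m b : ℕ) (d : Fin b → ℕ) (x y : ZMod (2 * m)) : Prop :=
  y = x + 1 ∨
    (Odd x.val ∧ ∃ j : Fin b, x.val % (2 * b) = 2 * (j : ℕ) + 1 ∧ y = x + (d j : ZMod (2 * m)))

/-- The D3 graph `G(m, b, d)` of order `2*m` with symmetry factor `b` and
chord indices `d : Fin b → ℕ`: distinct vertices `x y : ZMod (2*m)` are adjacent iff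
`y = x + 1`, or `y = x - 1`, or `x` is odd and `y = x + d j` for the unique `j` with
`x.val ≡ 2*j + 1 (mod 2*b)`, or `y` is odd and `x = y + d j` likewise. -/
def D3Graph (m b : ℕ) (d : Fin b → ℕ) : SimpleGraph (ZMod (2 * m)) where
  Adj x y := x ≠ y ∧ (d3Rel m b d x y ∨ d3Rel m b d y x)
  symm := by
    refine ⟨?_⟩
    intro x y h
    exact ⟨h.1.symm, h.2.symm⟩
  loopless := by
    refine ⟨?_⟩
    intro x h
    exact h.1 rfl


namespace SimpleGraph

variable {V : Type*} {G : SimpleGraph V}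

theorem exists_isCycle_length_eq_egirth_of_forall_embedding (hG : ¬G.IsAcyclic) {P : V → Prop}
    (hP : ∀ a, ∃ f : G ↪g G, P (f a)) :
    ∃ (v : V) (c : G.Walk v v), c.IsCycle ∧ (c.length : ℕ∞) = G.egirth ∧ P v := by
  obtain ⟨a, c, hc, hlen⟩ := exists_egirth_eq_length.mpr hG
  obtain ⟨f, hfa⟩ := hP a
  exact ⟨f a, c.map f.toHom, hc.map f.injective, by rw [Walk.length_map, hlen], hfa⟩

theorem not_isAcyclic_of_adj_add_one {N : ℕ} (hN : 3 ≤ N) {G : SimpleGraph (ZMod N)}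
    (hG : ∀ x, G.Adj x (x + 1)) : ¬G.IsAcyclic := by
  obtain ⟨n, rfl⟩ : ∃ n, N = n + 3 := ⟨N - 3, by omega⟩
  -- `ZMod (n + 3)` is `Fin (n + 3)` with the same ring structure.
  have hle : cycleGraph (n + 3) ≤ G := by
    rintro x y (hxy | hyx)
    · obtain rfl := sub_eq_iff_eq_add'.mp hxy
      exact (hG y).symm
    · obtain rfl := sub_eq_iff_eq_add'.mp hyx
      exact hG x
  exact fun hacyc => isAcyclic_iff_free_cycleGraph.mp hacyc (n + 3) (by omega) (.of_le hle)

end SimpleGraph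

theorem ZMod.val_add_mod_of_castHom_eq_zero {n c : ℕ} [NeZero n] (hc : c ∣ n) {u : ZMod n}
    (hu : ZMod.castHom hc (ZMod c) u = 0) (x : ZMod n) : (x + u).val % c = x.val % c := by
  have hval (z : ZMod n) : z.val % c = (ZMod.castHom hc (ZMod c) z).val := by
    rw [ZMod.castHom_apply, ZMod.cast_eq_val, ZMod.val_natCast]
  rw [hval, hval x, map_add, hu, add_zero]

theorem Nat.odd_of_mod_two_mul_eq {n b j : ℕ} (h : n % (2 * b) = 2 * j + 1) : Odd n := by
  rw [Nat.odd_iff, ← Nat.mod_mod_of_dvd n (dvd_mul_right 2 b), h]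
  omega

namespace D3Graph

variable {m b : ℕ} {d : Fin b → ℕ}

theorem adj_add_one (hm : 1 ≤ m) (x : ZMod (2 * m)) : (D3Graph m b d).Adj x (x + 1) := by
  have : Fact (1 < 2 * m) := ⟨by omega⟩
  exact ⟨fun h => one_ne_zero (left_eq_add.mp h), Or.inl (Or.inl rfl)⟩

theorem not_isAcyclic (hm : 2 ≤ m) : ¬(D3Graph m b d).IsAcyclic :=
  SimpleGraph.not_isAcyclic_of_adj_add_one (by omega) (adj_add_one (by omega))

theorem d3Rel_add_right [NeZero m] (hbm : 2 * b ∣ 2 * m) {u : ZMod (2 * m)}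
    (hu : ZMod.castHom hbm (ZMod (2 * b)) u = 0) {x y : ZMod (2 * m)} (h : d3Rel m b d x y) :
    d3Rel m b d (x + u) (y + u) := by
  rcases h with rfl | ⟨-, j, hj, rfl⟩
  · exact Or.inl (add_right_comm x 1 u)
  · have hj' : (x + u).val % (2 * b) = 2 * j + 1 := by
      rw [ZMod.val_add_mod_of_castHom_eq_zero hbm hu, hj]
    exact Or.inr ⟨Nat.odd_of_mod_two_mul_eq hj', j, hj', add_right_comm x _ u⟩

def addRight [NeZero m] (hbm : 2 * b ∣ 2 * m) (u : ZMod (2 * m))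
    (hu : ZMod.castHom hbm (ZMod (2 * b)) u = 0) : D3Graph m b d ↪g D3Graph m b d where
  toEmbedding := Equiv.toEmbedding (Equiv.addRight u)
  map_rel_iff' {x y} := by
    have hu' : ZMod.castHom hbm (ZMod (2 * b)) (-u) = 0 := by rw [map_neg, hu, neg_zero]
    refine ⟨fun h => ?_, fun h => ?_⟩
    · have h' := h.2.imp (d3Rel_add_right hbm hu') (d3Rel_add_right hbm hu')
      simp only [Equiv.coe_toEmbedding, Equiv.coe_addRight, add_neg_cancel_right] at h h'
      exact ⟨fun hxy => h.1 (congrArg (· + u) hxy), h'⟩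
    · exact ⟨fun hxy => h.1 (add_right_cancel hxy),
        h.2.imp (d3Rel_add_right hbm hu) (d3Rel_add_right hbm hu)⟩

end D3Graph

theorem stmt_1_general (m b : ℕ) (hm : 2 ≤ m) (hbm : b ∣ m)
    (d : Fin b → ℕ) :
    ∃ (v : ZMod (2 * m)) (c : (D3Graph m b d).Walk v v),
      c.IsCycle ∧ (c.length : ℕ∞) = (D3Graph m b d).egirth ∧ v.val < 2 * b := by
  have : NeZero m := ⟨by omega⟩
  have h2bm : 2 * b ∣ 2 * m := mul_dvd_mul_left 2 hbm
  have hbpos : 0 < b := Nat.pos_of_dvd_of_pos hbm (by omega)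
  refine SimpleGraph.exists_isCycle_length_eq_egirth_of_forall_embedding
    (D3Graph.not_isAcyclic hm) fun a => ?_
  set r := a.val % (2 * b) with hr
  refine ⟨D3Graph.addRight h2bm ((r : ZMod (2 * m)) - a) ?_, ?_⟩
  · rw [map_sub, map_natCast, ZMod.castHom_apply, ZMod.cast_eq_val, hr, ZMod.natCast_mod,
      sub_self]
  · have hr2b : r < 2 * b := Nat.mod_lt _ (by omega)
    have hrm : r < 2 * m := hr2b.trans_le (Nat.le_of_dvd (by omega) h2bm)
    simpa [D3Graph.addRight, ZMod.val_natCast, Nat.mod_eq_of_lt hrm] using hr2b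

/-- In a D3 graph `G(m, b, d)` with `m ≥ 2`, the girth is realized by a cycle through some
vertex `v` with `v.val < 2*b`. -/
theorem stmt_1 (m b : ℕ) (hm : 2 ≤ m) (hb : 1 ≤ b) (hbm : b ∣ m)
    (d : Fin b → ℕ) (hodd : ∀ j, Odd (d j)) (h3 : ∀ j, 3 ≤ d j)
    (hle : ∀ j, d j ≤ 2 * m - 3) :
    ∃ (v : ZMod (2 * m)) (c : (D3Graph m b d).Walk v v),
      c.IsCycle ∧ (c.length : ℕ∞) = (D3Graph m b d).egirth ∧ v.val < 2 * b :=
  stmt_1_general m b hm hbm d
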